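/- Fix p ∈ (0,1). For each r ≥ 1 along a sequence with r → ∞, set a = r^{p−1}, and let x^{◦,a} ∈ ℝ^K have all coordinates positive and satisfy χ_{k,k',i}(x^{◦,a}) → 0 as r → ∞ for every pair of edges (k,i), (k',i) ∈ M. Define ν_i^{*,a} = 1 − log(x^{◦,a}_{e_i})/log a for i ∈ I, and x^{*,a}_k = (1/c_k)·a^{1 − Σ_{i∈I} k_i ν_i^{*,a}} for k ∈ K. Then for every k ∈ K, the ratio x^{◦,a}_k / x^{*,a}_k → 1 as r → ∞. -/

import Mathlib

/-!
Write `G(k) = log (c_k x_k) - log a + ∑_j k_j (log a - log x_{e_j})` (`logRatioProductForm`),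
so that `x_k / x*_k = exp G(k)` as soon as `log a ≠ 0` (which `p < 1` guarantees eventually,
since then `a < 1`). Then `G(e_i) = 0`, and the χ of the edge pair `(k + e_i, i)`, `(e_i, i)` is
exactly `G(k) - G(k + e_i)`. As `K̄` is down-closed, every `k ∈ K` is reached from some `e_i` by
adding unit vectors without leaving `K`, so `G(k) → 0` along the sequence.
-/

open Finset Filter

/-- `c_k = ∏_i (k_i)!`. -/
noncomputable def confC {I : Type*} [Fintype I] (k : I → ℕ) : ℝ :=
  ∏ i, (Nat.factorial (k i) : ℝ)

/-- The coordinates of `x` extended by the convention `x_0 = a`. -/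
def xeDef {I : Type*} [Fintype I]
    (a : ℝ) (x : (I → ℕ) → ℝ) (m : I → ℕ) : ℝ :=
  if m = 0 then a else x m

/-- `χ_{k,k',i}(x)`, with the convention `x_0 = a`. -/
noncomputable def chiDef {I : Type*} [Fintype I] [DecidableEq I]
    (a : ℝ) (x : (I → ℕ) → ℝ) (k k' : I → ℕ) (i : I) : ℝ :=
  Real.log ((k' i : ℝ) * xeDef a x (k - Pi.single i 1) * xeDef a x k')
    - Real.log ((k i : ℝ) * xeDef a x k * xeDef a x (k' - Pi.single i 1))

/-- `(k, i)` is an edge. -/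
def isEdge {I : Type*} [Fintype I] [DecidableEq I]
    (Kbar : Finset (I → ℕ)) (k : I → ℕ) (i : I) : Prop :=
  k ∈ Kbar.erase 0 ∧ 1 ≤ k i ∧ k - Pi.single i 1 ∈ Kbar

lemma confC_pos {I : Type*} [Fintype I] (k : I → ℕ) : 0 < confC k :=
  prod_pos fun _ _ => mod_cast Nat.factorial_pos _

section

variable {I : Type*} [DecidableEq I]

lemma add_single_ne_zero (k : I → ℕ) (i : I) : k + Pi.single i 1 ≠ 0 :=
  fun h => by simpa using congrFun h i

lemma lt_add_single (k : I → ℕ) (i : I) : k < k + Pi.single i 1 :=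
  lt_add_of_pos_right k (by simp)

lemma exists_eq_add_single {k : I → ℕ} (hk : k ≠ 0) :
    ∃ (k' : I → ℕ) (i : I), k = k' + Pi.single i 1 := by
  obtain ⟨i, hi⟩ := Function.ne_iff.1 hk
  refine ⟨k - Pi.single i 1, i, funext fun j => ?_⟩
  rcases eq_or_ne j i with rfl | hj
  · simp at hi ⊢; omega
  · simp [hj]

variable [Fintype I]

lemma confC_single (i : I) : confC (Pi.single i 1 : I → ℕ) = 1 :=
  prod_eq_one fun j _ => by rcases eq_or_ne j i with rfl | hj <;> simp [*]

lemma confC_add_single (k : I → ℕ) (i : I) :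
    confC (k + Pi.single i 1) = (k i + 1) * confC k := by
  unfold confC
  rw [Fintype.prod_eq_mul_prod_compl i,
    Fintype.prod_eq_mul_prod_compl i (fun j => ((k j).factorial : ℝ)),
    prod_congr rfl fun j hj => by
      rw [Pi.add_apply, Pi.single_eq_of_ne (by simpa using hj), add_zero]]
  simp [Nat.factorial_succ, mul_assoc]

lemma sum_add_single_mul (k : I → ℕ) (i : I) (f : I → ℝ) :
    ∑ j, ((k + Pi.single i 1 : I → ℕ) j : ℝ) * f j = ∑ j, (k j : ℝ) * f j + f i := by
  simp [add_mul, sum_add_distrib, Pi.single_apply]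

lemma isEdge_add_single {Kbar : Finset (I → ℕ)} {k : I → ℕ} {i : I}
    (hk : k ∈ Kbar) (hki : k + Pi.single i 1 ∈ Kbar) : isEdge Kbar (k + Pi.single i 1) i :=
  ⟨mem_erase.2 ⟨add_single_ne_zero k i, hki⟩, by simp, by rwa [add_tsub_cancel_right]⟩

noncomputable def logRatioProductForm (a : ℝ) (x : (I → ℕ) → ℝ) (k : I → ℕ) : ℝ :=
  Real.log (confC k * x k) - Real.log a
    + ∑ j, (k j : ℝ) * (Real.log a - Real.log (x (Pi.single j 1)))

lemma logRatioProductForm_single (a : ℝ) (x : (I → ℕ) → ℝ) (i : I) :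
    logRatioProductForm a x (Pi.single i 1) = 0 := by
  simp [logRatioProductForm, confC_single, Pi.single_apply]

lemma chiDef_add_single_single_eq_sub {a : ℝ} {x : (I → ℕ) → ℝ} {k : I → ℕ} {i : I}
    (hk : k ≠ 0) (ha : 0 < a) (hxk : 0 < x k) (hxki : 0 < x (k + Pi.single i 1))
    (hxi : 0 < x (Pi.single i 1)) :
    chiDef a x (k + Pi.single i 1) (Pi.single i 1) i
      = logRatioProductForm a x k - logRatioProductForm a x (k + Pi.single i 1) := by
  have hki : (0 : ℝ) < k i + 1 := by positivity
  have hc := confC_pos k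
  have hxe₁ : xeDef a x (k + Pi.single i 1 - Pi.single i 1) = x k := by
    rw [add_tsub_cancel_right, xeDef, if_neg hk]
  have hxe₂ : xeDef a x (Pi.single i 1) = x (Pi.single i 1) := if_neg (by simp)
  have hxe₃ : xeDef a x (Pi.single i 1 - Pi.single i 1) = a := by simp [xeDef]
  have hxe₄ : xeDef a x (k + Pi.single i 1) = x (k + Pi.single i 1) :=
    if_neg (add_single_ne_zero k i)
  rw [chiDef, hxe₁, hxe₂, hxe₃, hxe₄, logRatioProductForm, logRatioProductForm,
    confC_add_single, sum_add_single_mul]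
  simp only [Pi.single_eq_same, Pi.add_apply, Nat.cast_add, Nat.cast_one, one_mul]
  rw [Real.log_mul hxk.ne' hxi.ne', Real.log_mul (by positivity) ha.ne',
    Real.log_mul hki.ne' hxki.ne', Real.log_mul (by positivity) hxki.ne',
    Real.log_mul (by positivity) hc.ne', Real.log_mul hc.ne' hxk.ne']
  ring

lemma div_productForm_eq_exp_logRatioProductForm {a : ℝ} {x : (I → ℕ) → ℝ} {k : I → ℕ}
    (ha0 : 0 < a) (ha1 : a ≠ 1) (hx : 0 < x k) :
    x k / ((1 / confC k)
        * a ^ (1 - ∑ j, (k j : ℝ) * (1 - Real.log (x (Pi.single j 1)) / Real.log a)))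
      = Real.exp (logRatioProductForm a x k) := by
  have hlog : Real.log a ≠ 0 := Real.log_ne_zero_of_pos_of_ne_one ha0 ha1
  have hexponent :
      Real.log a * (1 - ∑ j, (k j : ℝ) * (1 - Real.log (x (Pi.single j 1)) / Real.log a))
      = Real.log a - ∑ j, (k j : ℝ) * (Real.log a - Real.log (x (Pi.single j 1))) := by
    rw [mul_sub, mul_one, mul_sum]
    congr 1
    refine sum_congr rfl fun j _ => ?_
    field_simp
  have hc := confC_pos k
  rw [Real.rpow_def_of_pos ha0, hexponent, logRatioProductForm, Real.exp_add, Real.exp_sub,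
    Real.exp_sub, Real.exp_log (mul_pos hc hx), Real.exp_log ha0]
  field_simp

theorem tendsto_zero_of_tendsto_add_single_sub {E α : Type*} [AddCommGroup E]
    [TopologicalSpace E] [IsTopologicalAddGroup E] {Kbar : Finset (I → ℕ)}
    (hmono : ∀ k ∈ Kbar, ∀ k' : I → ℕ, (∀ i, k' i ≤ k i) → k' ∈ Kbar)
    {l : Filter α} {f : α → (I → ℕ) → E}
    (hsingle : ∀ i, Tendsto (fun n => f n (Pi.single i 1)) l (nhds 0))
    (hstep : ∀ k ∈ Kbar.erase 0, ∀ i, k + Pi.single i 1 ∈ Kbar →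
      Tendsto (fun n => f n (k + Pi.single i 1) - f n k) l (nhds 0)) :
    ∀ k ∈ Kbar.erase 0, Tendsto (fun n => f n k) l (nhds 0) := by
  intro k
  induction k using WellFoundedLT.induction with
  | ind k ih =>
    intro hk
    obtain ⟨hk0, hkK⟩ := mem_erase.1 hk
    obtain ⟨k', i, rfl⟩ := exists_eq_add_single hk0
    rcases eq_or_ne k' 0 with rfl | hk'0
    · simpa using hsingle i
    have hk' : k' ∈ Kbar.erase 0 :=
      mem_erase.2 ⟨hk'0, hmono _ hkK k' fun j => by simp⟩
    simpa using (hstep k' hk' i hkK).add (ih k' (lt_add_single k' i) hk')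

end

theorem ratio_product_form_tendsto_one_general
    {I : Type*} [Fintype I] [DecidableEq I]
    (Kbar : Finset (I → ℕ))
    (h0 : (0 : I → ℕ) ∈ Kbar)
    (hunit : ∀ i : I, Pi.single i 1 ∈ Kbar)
    (hmono : ∀ k ∈ Kbar, ∀ k' : I → ℕ, (∀ i, k' i ≤ k i) → k' ∈ Kbar)
    (p : ℝ) (hp : p ∈ Set.Ioo (0 : ℝ) 1)
    (r : ℕ → ℝ) (hrtop : Tendsto r atTop atTop)
    (a : ℕ → ℝ) (ha : ∀ n, a n = r n ^ (p - 1))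
    (xo : ℕ → (I → ℕ) → ℝ)
    (hpos : ∀ n, ∀ k ∈ Kbar.erase 0, 0 < xo n k)
    (hchi : ∀ i : I, ∀ k k' : I → ℕ, isEdge Kbar k i → isEdge Kbar k' i →
      Tendsto (fun n => chiDef (a n) (xo n) k k' i) atTop (nhds 0))
    (νs : ℕ → I → ℝ)
    (hν : ∀ n i, νs n i = 1 - Real.log (xo n (Pi.single i 1)) / Real.log (a n))
    (xs : ℕ → (I → ℕ) → ℝ)
    (hxs : ∀ n, ∀ k ∈ Kbar.erase 0,
      xs n k = (1 / confC k) * a n ^ (1 - ∑ i, (k i : ℝ) * νs n i)) :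
    ∀ k ∈ Kbar.erase 0,
      Tendsto (fun n => xo n k / xs n k) atTop (nhds 1) := by
  have ha01 : ∀ᶠ n in atTop, 0 < a n ∧ a n < 1 :=
    (hrtop.eventually_gt_atTop 1).mono fun n hn => by
      rw [ha]
      exact ⟨by positivity, Real.rpow_lt_one_of_one_lt_of_neg hn (by linarith [hp.2])⟩
  have hlog : ∀ k ∈ Kbar.erase 0,
      Tendsto (fun n => logRatioProductForm (a n) (xo n) k) atTop (nhds 0) := by
    refine tendsto_zero_of_tendsto_add_single_sub hmono
      (fun i => by simp only [logRatioProductForm_single, tendsto_const_nhds]) ?_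
    intro k hk i hki
    have hedge := isEdge_add_single (mem_of_mem_erase hk) hki
    have hedge₁ := isEdge_add_single h0 (by simpa using hunit i)
    rw [zero_add] at hedge₁
    have hχ := (hchi i _ _ hedge hedge₁).neg
    rw [neg_zero] at hχ
    refine hχ.congr' ?_
    filter_upwards [ha01] with n hn
    rw [chiDef_add_single_single_eq_sub (mem_erase.1 hk).1 hn.1 (hpos n k hk)
      (hpos n _ hedge.1) (hpos n _ hedge₁.1)]
    ring
  intro k hk
  have hexp := (Real.continuous_exp.tendsto 0).comp (hlog k hk)
  rw [Real.exp_zero] at hexp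
  refine hexp.congr' ?_
  filter_upwards [ha01] with n hn
  rw [hxs n k hk, funext (hν n),
    div_productForm_eq_exp_logRatioProductForm hn.1 hn.2.ne (hpos n k hk)]
  rfl

/-- claim (eq-ratio-prod-form): along a sequence `r → ∞` with
`a = r^{p−1}`, if `χ_{k,k',i}(x^{◦,a}) → 0` for every pair of edges, then with
`ν_i^{*,a} = 1 − log(x^{◦,a}_{e_i})/log a` and `x^{*,a}_k = (1/c_k)·a^{1−∑_i k_i ν_i^{*,a}}`,
the ratio `x^{◦,a}_k / x^{*,a}_k → 1` for every `k ∈ K`. -/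
theorem ratio_product_form_tendsto_one
    {I : Type*} [Fintype I] [DecidableEq I] [Nonempty I]
    (Kbar : Finset (I → ℕ))
    (h0 : (0 : I → ℕ) ∈ Kbar)
    (hunit : ∀ i : I, Pi.single i 1 ∈ Kbar)
    (hmono : ∀ k ∈ Kbar, ∀ k' : I → ℕ, (∀ i, k' i ≤ k i) → k' ∈ Kbar)
    (p : ℝ) (hp : p ∈ Set.Ioo (0 : ℝ) 1)
    (r : ℕ → ℝ) (hr1 : ∀ n, 1 ≤ r n) (hrtop : Tendsto r atTop atTop)
    (a : ℕ → ℝ) (ha : ∀ n, a n = r n ^ (p - 1))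
    (xo : ℕ → (I → ℕ) → ℝ)
    (hpos : ∀ n, ∀ k ∈ Kbar.erase 0, 0 < xo n k)
    (hchi : ∀ i : I, ∀ k k' : I → ℕ, isEdge Kbar k i → isEdge Kbar k' i →
      Tendsto (fun n => chiDef (a n) (xo n) k k' i) atTop (nhds 0))
    (νs : ℕ → I → ℝ)
    (hν : ∀ n i, νs n i = 1 - Real.log (xo n (Pi.single i 1)) / Real.log (a n))
    (xs : ℕ → (I → ℕ) → ℝ)
    (hxs : ∀ n, ∀ k ∈ Kbar.erase 0,
      xs n k = (1 / confC k) * a n ^ (1 - ∑ i, (k i : ℝ) * νs n i)) :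
    ∀ k ∈ Kbar.erase 0,
      Tendsto (fun n => xo n k / xs n k) atTop (nhds 1) :=
  ratio_product_form_tendsto_one_general Kbar h0 hunit hmono p hp r hrtop a ha xo hpos hchi νs hν xs
    hxs
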